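/- Let N be a Tutte chain-group on V over a field F (a subspace of F^V), and let Ñ = {f↑ + g↓ : f ∈ N, g ∈ N^⊥} ⊆ (F²)^V, where f↑(v) = (f(v), 0) and g↓(v) = (0, g(v)). Then Ñ is a Lagrangian chain-group on V to K = F² with respect to the symmetric form b⁺((a,b),(c,d)) = ad + bc, i.e., Ñ is totally isotropic of dimension |V|. -/

import Mathlib

variable {F : Type*} [Field F] {V : Type*} [Fintype V] [DecidableEq V]

/-- The symmetric bilinear form `b⁺((a,b),(c,d)) = ad + bc` on `K = F²`. -/
def bplus : F × F → F × F → F := fun x y => x.1 * y.2 + x.2 * y.1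

/-- The orthogonal complement `N^⊥` of a Tutte chain-group `N ⊆ F^V` with
respect to the dot product. -/
def tutteOrth (N : Submodule F (V → F)) : Submodule F (V → F) where
  carrier := {g | ∀ f ∈ N, ∑ v, f v * g v = 0}
  add_mem' := by
    intro a b ha hb f hf
    simp only [Pi.add_apply, mul_add, Finset.sum_add_distrib, ha f hf,
      hb f hf, add_zero]
  zero_mem' := by
    intro f hf
    simp
  smul_mem' := by
    intro c a ha f hf
    simp only [Pi.smul_apply, smul_eq_mul, mul_left_comm, ← Finset.mul_sum,
      ha f hf, mul_zero]

/-- The interleaving map `(f, g) ↦ (v ↦ (f v, g v))` sending a pair of chains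
to `F²`-valued chains, i.e. `(f,g) ↦ f↑ + g↓`. -/
def interleave : ((V → F) × (V → F)) →ₗ[F] (V → F × F) where
  toFun p := fun v => (p.1 v, p.2 v)
  map_add' p q := rfl
  map_smul' c p := rfl

/-! Writing `f ⬝ᵥ g` for the dot product, `b⁺` summed over `V` pairs `f↑ + g↓` with `f'↑ + g'↓`
to `f ⬝ᵥ g' + f' ⬝ᵥ g`, and both terms vanish when `f, f' ∈ N` and `g, g' ∈ N^⊥`. Since
`(f, g) ↦ f↑ + g↓` is injective, `dim Ñ = dim N + dim N^⊥`, which is `|V|` because the dot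
product is nondegenerate. -/

open Module Matrix

theorem Submodule.finrank_prod {R M M' : Type*} [DivisionRing R] [AddCommGroup M]
    [AddCommGroup M'] [Module R M] [Module R M'] [FiniteDimensional R M] [FiniteDimensional R M']
    (p : Submodule R M) (q : Submodule R M') :
    finrank R (p.prod q) = finrank R p + finrank R q := by
  have hinj : Function.Injective (p.subtype.prodMap q.subtype) := by
    rw [← LinearMap.ker_eq_bot, LinearMap.ker_prodMap, p.ker_subtype, q.ker_subtype,
      Submodule.prod_bot]
  rw [← Module.finrank_prod, ← LinearMap.finrank_range_of_inj hinj, LinearMap.range_prodMap,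
    p.range_subtype, q.range_subtype]

theorem ker_dotProductBilin {R n : Type*} [CommRing R] [Fintype n] :
    LinearMap.ker (dotProductBilin R R : (n → R) →ₗ[R] (n → R) →ₗ[R] R) = ⊥ :=
  LinearMap.ker_eq_bot'.2 fun v hv => dotProduct_eq_zero v fun w => LinearMap.congr_fun hv w

omit [DecidableEq V] in
theorem tutteOrth_eq_orthogonal (N : Submodule F (V → F)) :
    tutteOrth N = LinearMap.BilinForm.orthogonal (dotProductBilin F F) N := rfl

omit [DecidableEq V] in
theorem finrank_add_finrank_tutteOrth (N : Submodule F (V → F)) :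
    finrank F N + finrank F (tutteOrth N) = Fintype.card V := by
  rw [tutteOrth_eq_orthogonal, LinearMap.BilinForm.finrank_add_finrank_orthogonal',
    ker_dotProductBilin, inf_bot_eq, finrank_bot, add_zero, finrank_fintype_fun_eq_card]

omit [Fintype V] [DecidableEq V] in
theorem interleave_injective : Function.Injective (interleave : _ →ₗ[F] (V → F × F)) :=
  fun _ _ h => Prod.ext (funext fun v => congr_arg Prod.fst (congr_fun h v))
    (funext fun v => congr_arg Prod.snd (congr_fun h v))

omit [DecidableEq V] in
theorem sum_bplus_interleave (p q : (V → F) × (V → F)) :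
    ∑ x, bplus (interleave p x) (interleave q x) = p.1 ⬝ᵥ q.2 + q.1 ⬝ᵥ p.2 := by
  simp only [interleave, bplus, LinearMap.coe_mk, AddHom.coe_mk, Finset.sum_add_distrib,
    dotProduct, mul_comm (p.2 _)]

/-- For a Tutte chain-group `N` on `V` to `F`, the chain-group
`Ñ = {f↑ + g↓ : f ∈ N, g ∈ N^⊥}` is a Lagrangian chain-group on `V` to
`K = F²` with respect to the symmetric form `b⁺`: it is totally isotropic of
dimension `|V|`. -/
theorem tutte_to_lagrangian (N : Submodule F (V → F)) :
    (∀ u ∈ (N.prod (tutteOrth N)).map interleave,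
      ∀ w ∈ (N.prod (tutteOrth N)).map interleave,
        ∑ x, bplus (u x) (w x) = 0) ∧
    Module.finrank F ((N.prod (tutteOrth N)).map interleave)
      = Fintype.card V := by
  constructor
  · rintro _ ⟨p, ⟨hp₁, hp₂⟩, rfl⟩ _ ⟨q, ⟨hq₁, hq₂⟩, rfl⟩
    have hpq : p.1 ⬝ᵥ q.2 = 0 := hq₂ p.1 hp₁
    have hqp : q.1 ⬝ᵥ p.2 = 0 := hp₂ q.1 hq₁
    rw [sum_bplus_interleave, hpq, hqp, add_zero]
  · rw [← (Submodule.equivMapOfInjective _ interleave_injective _).finrank_eq,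
      Submodule.finrank_prod, finrank_add_finrank_tutteOrth]
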